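/- Let q be a prime with q ≡ 1 (mod 3), and let p be an integer not divisible by q. Then for every integer j, Σ_{ν=0}^{q−1} ζ_q^{jν − 4pν³} ≠ 0. Equivalently, for such q the set of points of constancy 𝔓(p/q) is empty. -/

import Mathlib

/-!
If the sum vanished, it would still vanish after applying the Galois automorphisms `ζ ↦ ζ^a` of
`ℚ(ζ_q)`, i.e. after twisting the phase `f(x) = j x - 4 p x³` by any `a ∈ (ℤ/q)ˣ`. Orthogonality of
additive characters then shows that every value of `f` is taken exactly once, so `f` would be a
permutation of `ℤ/q`. But for `q ≡ 1 (mod 3)` and `m = (q - 1) / 3` Hermite's criterion fails: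
`∑ₓ f(x)^m = -(-4p)^m ≠ 0`, whereas `∑ₓ x^m = 0`.
-/

/-- ζ_m = exp(2πi/m), the primitive m-th root of unity. -/
noncomputable def zeta (m : ℕ) : ℂ := Complex.exp (2 * Real.pi * Complex.I / (m : ℂ))

open Finset

namespace FiniteField

variable {K : Type*} [Field K] [Fintype K]

theorem sum_pow_card_sub_one_eq_neg_one : ∑ x : K, x ^ (Fintype.card K - 1) = -1 := by
  classical
  have hpow : ∀ x : K, x ^ (Fintype.card K - 1) = if x = 0 then 0 else 1 := fun x => by
    split_ifs with hx
    · rw [hx, zero_pow (by have := Fintype.one_lt_card (α := K); omega)]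
    · exact pow_card_sub_one_eq_one x hx
  simp [hpow, sum_ite, filter_ne', Nat.cast_sub Fintype.card_pos]

theorem sum_linear_add_cube_pow {m : ℕ} (hm : 3 * m = Fintype.card K - 1) (a b : K) :
    ∑ x : K, (b * x + a * x ^ 3) ^ m = -a ^ m := by
  have hexpand : ∀ x : K, (b * x + a * x ^ 3) ^ m =
      ∑ i ∈ range (m + 1), b ^ i * a ^ (m - i) * m.choose i * x ^ (i + 3 * (m - i)) := fun x => by
    rw [add_pow]
    refine sum_congr rfl fun i _ => ?_
    ring
  simp_rw [hexpand]
  -- only the term `i = 0` has exponent `3 m = q - 1`; all the others are below `q - 1`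
  rw [sum_comm, sum_eq_single 0]
  · simp [← mul_sum, hm, sum_pow_card_sub_one_eq_neg_one]
  · intro i hi hi0
    rw [← mul_sum, sum_pow_lt_card_sub_one _ _ (by rw [mem_range] at hi; omega), mul_zero]
  · simp

theorem not_bijective_linear_add_cube (hK : Fintype.card K % 3 = 1) {a : K} (ha : a ≠ 0) (b : K) :
    ¬ Function.Bijective fun x : K => b * x + a * x ^ 3 := by
  intro hbij
  have hcard := Fintype.one_lt_card (α := K)
  set m := (Fintype.card K - 1) / 3
  have hm : 3 * m = Fintype.card K - 1 := by omega
  have hsum : -a ^ m = 0 := by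
    rw [← sum_linear_add_cube_pow hm, hbij.sum_comp (· ^ m)]
    exact sum_pow_lt_card_sub_one K m (by omega)
  exact ha (pow_eq_zero_iff (by omega) |>.mp (neg_eq_zero.mp hsum))

end FiniteField

namespace AddChar

section Counting

variable {R R' : Type*} [CommRing R] [Fintype R] [DecidableEq R] [CommRing R'] [IsDomain R']
  {ψ : AddChar R R'}

theorem card_fiber_mul_card (hψ : ψ.IsPrimitive) (f : R → R) (c : R) :
    (#{x | f x = c} : R') * Fintype.card R = ∑ a, ∑ x, ψ (a * (f x - c)) := by
  rw [sum_comm]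
  simp_rw [sum_mulShift _ hψ, sub_eq_zero, Nat.cast_ite, Nat.cast_zero]
  rw [sum_ite, sum_const_zero, add_zero, sum_const, nsmul_eq_mul]

theorem injective_of_sum_mul_eq_zero [CharZero R'] (hψ : ψ.IsPrimitive) {f : R → R}
    (h : ∀ a ≠ 0, ∑ x, ψ (a * f x) = 0) : Function.Injective f := by
  have hfiber : ∀ c, #{x | f x = c} = 1 := fun c => by
    have hsum : ∑ a, ∑ x, ψ (a * (f x - c)) = Fintype.card R := by
      rw [sum_eq_single 0 (fun a _ ha => ?_) (by simp)]
      · simp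
      · simp_rw [mul_sub, sub_eq_add_neg, map_add_eq_mul, ← sum_mul, h a ha, zero_mul]
    have hcard : (Fintype.card R : R') ≠ 0 := Nat.cast_ne_zero.mpr Fintype.card_ne_zero
    have hmul : (#{x | f x = c} : R') * Fintype.card R = 1 * Fintype.card R := by
      rw [card_fiber_mul_card hψ, hsum, one_mul]
    exact_mod_cast mul_right_cancel₀ hcard hmul
  intro x y hxy
  exact card_le_one.mp (hfiber (f x)).le x (by simp) y (by simp [hxy])

end Counting

theorem isPrimitiveRoot_apply {q : ℕ} [Fact q.Prime] {R : Type*} [CommRing R] [IsDomain R]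
    {ψ : AddChar (ZMod q) R} (hψ : Function.Injective ψ) {a : ZMod q} (ha : a ≠ 0) :
    IsPrimitiveRoot (ψ a) q := by
  refine isPrimitiveRoot_of_mem_nthRootsFinset Fact.out ?_ ?_
  · rw [Polynomial.mem_nthRootsFinset (Fact.out : q.Prime).pos, ← map_nsmul_eq_pow, nsmul_eq_mul,
      ZMod.natCast_self, zero_mul, map_zero_eq_one]
  · exact fun h => ha (hψ (h.trans ψ.map_zero_eq_one.symm))

end AddChar

theorem IsPrimitiveRoot.sum_pow_eq_zero_of_sum_pow_eq_zero {K : Type*} [Field K] [CharZero K]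
    {n : ℕ} (hn : 0 < n) {ζ η : K} (hζ : IsPrimitiveRoot ζ n) (hη : IsPrimitiveRoot η n)
    {ι : Type*} (s : Finset ι) (e : ι → ℕ) (h : ∑ i ∈ s, ζ ^ e i = 0) :
    ∑ i ∈ s, η ^ e i = 0 := by
  set P : Polynomial ℚ := ∑ i ∈ s, Polynomial.X ^ e i
  have haeval : ∀ z : K, Polynomial.aeval z P = ∑ i ∈ s, z ^ e i := fun z => by simp [P]
  rw [← haeval, ← minpoly.dvd_iff, ← Polynomial.cyclotomic_eq_minpoly_rat hη hn,
    Polynomial.cyclotomic_eq_minpoly_rat hζ hn, minpoly.dvd_iff, haeval]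
  exact h

theorem AddChar.sum_apply_mul_eq_zero {q : ℕ} [Fact q.Prime] {K : Type*} [Field K] [CharZero K]
    {ψ : AddChar (ZMod q) K} (hψ : Function.Injective ψ) {ι : Type*} (s : Finset ι)
    (f : ι → ZMod q) (h : ∑ i ∈ s, ψ (f i) = 0) {a : ZMod q} (ha : a ≠ 0) :
    ∑ i ∈ s, ψ (a * f i) = 0 := by
  have hpow : ∀ c y : ZMod q, ψ (c * y) = ψ c ^ y.val := fun c y => by
    rw [← map_nsmul_eq_pow, nsmul_eq_mul, ZMod.natCast_zmod_val, mul_comm]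
  have h1 : ∑ i ∈ s, ψ 1 ^ (f i).val = 0 := by
    rw [← h]
    exact sum_congr rfl fun i _ => by rw [← hpow, one_mul]
  simp_rw [hpow]
  exact (isPrimitiveRoot_apply hψ one_ne_zero).sum_pow_eq_zero_of_sum_pow_eq_zero
    (Fact.out : q.Prime).pos (isPrimitiveRoot_apply hψ ha) s _ h1

theorem ZMod.sum_range_natCast {M : Type*} [AddCommMonoid M] (q : ℕ) [NeZero q]
    (g : ZMod q → M) : ∑ ν ∈ range q, g ν = ∑ x, g x := by
  refine sum_nbij' (fun ν => (ν : ZMod q)) ZMod.val (by simp) (by simp [ZMod.val_lt]) ?_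
    (by simp) (by simp)
  intro ν hν
  simp [ZMod.val_natCast, Nat.mod_eq_of_lt (mem_range.mp hν)]

theorem zeta_zpow (q : ℕ) [NeZero q] (k : ℤ) : zeta q ^ k = ZMod.stdAddChar (k : ZMod q) := by
  rw [zeta, ← Complex.exp_int_mul, ZMod.stdAddChar_coe]
  ring_nf

/-- For a prime q ≡ 1 (mod 3) and an integer p not divisible by q,
the even partial Kummer sum Σ_{ν=0}^{q−1} ζ_q^{jν − 4pν³} never vanishes:
the set of points of constancy is empty. -/
theorem no_points_of_constancy_q_one_mod_three
    (q : ℕ) (hq : q.Prime) (hq1 : q % 3 = 1) (p : ℤ) (hp : ¬ (q : ℤ) ∣ p) (j : ℤ) :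
    (∑ ν ∈ Finset.range q, zeta q ^ (j * (ν : ℤ) - 4 * p * (ν : ℤ) ^ 3)) ≠ 0 := by
  have : Fact q.Prime := ⟨hq⟩
  set f : ZMod q → ZMod q := fun x => (j : ZMod q) * x + -(4 * p : ZMod q) * x ^ 3
  have hsum : ∑ ν ∈ range q, zeta q ^ (j * (ν : ℤ) - 4 * p * (ν : ℤ) ^ 3) =
      ∑ x, ZMod.stdAddChar (f x) := by
    rw [← ZMod.sum_range_natCast]
    refine sum_congr rfl fun ν _ => ?_
    rw [zeta_zpow]
    push_cast [f]
    ring_nf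
  have hcoeff : -(4 * p : ZMod q) ≠ 0 := by
    have h4 : (4 : ZMod q) ≠ 0 := by
      rw [show (4 : ZMod q) = ((2 ^ 2 : ℕ) : ZMod q) by norm_num, ne_eq, ZMod.natCast_eq_zero_iff]
      intro h
      have := (Nat.prime_dvd_prime_iff_eq hq Nat.prime_two).mp (hq.dvd_of_dvd_pow h)
      omega
    exact neg_ne_zero.mpr (mul_ne_zero h4 (by rwa [ne_eq, ZMod.intCast_zmod_eq_zero_iff_dvd]))
  intro hS
  rw [hsum] at hS
  have hf : Function.Injective f :=
    AddChar.injective_of_sum_mul_eq_zero (ZMod.isPrimitive_stdAddChar q) fun a ha =>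
      AddChar.sum_apply_mul_eq_zero ZMod.injective_stdAddChar _ _ hS ha
  exact FiniteField.not_bijective_linear_add_cube (by rwa [ZMod.card]) hcoeff (j : ZMod q)
    (Finite.injective_iff_bijective.mp hf)
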